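/- Under the standing assumptions, let A be a bounded linear operator on L²(M, μ; X). If for all φ, ψ ∈ C and all f, g ∈ L²(M, μ; ℂ) with f(x) ≥ 0 and g(x) ≥ 0 for μ-a.e. x, the inner product ⟨f·φ, A(g·ψ)⟩ (where f·φ denotes the function x ↦ f(x)·φ) is a nonnegative real number, then A maps 𝒬 into 𝒬, i.e., A is positivity preserving with respect to the Hilbert cone 𝒬. -/

import Mathlib

open scoped ComplexOrder
open MeasureTheory

/-- A *Hilbert cone* in a complex Hilbert space `X`. -/
def IsHilbertCone {X : Type*} [NormedAddCommGroup X] [InnerProductSpace ℂ X]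
    (C : Set X) : Prop :=
  IsClosed C ∧ Convex ℝ C ∧
    (∀ (c : ℝ), 0 ≤ c → ∀ u ∈ C, c • u ∈ C) ∧
    (∀ u ∈ C, ∀ v ∈ C, (0 : ℂ) ≤ (inner ℂ u v : ℂ)) ∧
    (∀ w : X, ∃ u ∈ C, ∃ v ∈ C, ∃ u' ∈ C, ∃ v' ∈ C,
      w = u - v + Complex.I • (u' - v') ∧
        (inner ℂ u v : ℂ) = 0 ∧ (inner ℂ u' v' : ℂ) = 0)

/-- The conical hull of a set: all finite sums with nonnegative real coefficients. -/
def conicalCombinations {V : Type*} [AddCommMonoid V] [Module ℝ V] (s : Set V) : Set V :=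
  {v | ∃ (k : ℕ) (a : Fin k → ℝ) (x : Fin k → V),
    (∀ i, 0 ≤ a i) ∧ (∀ i, x i ∈ s) ∧ v = ∑ i, a i • x i}

/-! A Hilbert cone is self-dual: `⟪c, w⟫ ≥ 0` for all `c ∈ C` forces `w ∈ C`. By density the
hypothesis gives `⟪G, A F⟫ ≥ 0` for all `F, G ∈ 𝒬`. Testing `A F` against the indicators
`1_s • φ` (`μ s < ∞`, `φ` in a countable dense subset of `C`) shows that `(A F)(x)` pairs
nonnegatively with `C`, hence lies in `C`, for a.e. `x`. Finally every a.e. `C`-valued `L²`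
function lies in `𝒬`: it is an `L²`-limit of `C`-valued simple functions, and those are conical
combinations of such indicators. -/
open scoped NNReal ENNReal InnerProductSpace
open Filter Topology

section ConicalCombinations

variable {V : Type*} [AddCommMonoid V] [Module ℝ V] {s : Set V}

theorem conicalCombinations_eq_span (s : Set V) :
    conicalCombinations s = Submodule.span ℝ≥0 s := by
  ext v
  rw [SetLike.mem_coe, Submodule.mem_span_set']
  constructor
  · rintro ⟨k, a, x, ha, hx, rfl⟩
    exact ⟨k, fun i => ⟨a i, ha i⟩, fun i => ⟨x i, hx i⟩, rfl⟩
  · rintro ⟨k, a, x, rfl⟩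
    exact ⟨k, fun i => a i, fun i => x i, fun i => (a i).2, fun i => (x i).2, rfl⟩

theorem ContinuousLinearMap.nonneg_of_mem_closure_conicalCombinations [TopologicalSpace V]
    (L : V →L[ℝ] ℂ) (hs : ∀ v ∈ s, 0 ≤ L v) {v : V} (hv : v ∈ closure (conicalCombinations s)) :
    0 ≤ L v := by
  refine closure_minimal ?_ (isClosed_le continuous_const L.continuous) hv
  rintro _ ⟨k, a, x, ha, hx, rfl⟩
  simp only [Set.mem_ofPred_eq, map_sum, map_smul]
  exact Finset.sum_nonneg fun i _ => smul_nonneg (ha i) (hs _ (hx i))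

end ConicalCombinations

section InnerProductSpace

variable {E : Type*} [NormedAddCommGroup E] [InnerProductSpace ℂ E]

theorem inner_nonneg_symm {x y : E} (h : 0 ≤ ⟪x, y⟫_ℂ) : 0 ≤ ⟪y, x⟫_ℂ := by
  rw [← inner_conj_symm]
  exact star_nonneg_iff.mpr h

theorem inner_nonneg_of_mem_closure_conicalCombinations {s : Set E} (A : E →L[ℂ] E)
    (h : ∀ F ∈ s, ∀ G ∈ s, 0 ≤ ⟪F, A G⟫_ℂ) {F G : E} (hF : F ∈ closure (conicalCombinations s))
    (hG : G ∈ closure (conicalCombinations s)) : 0 ≤ ⟪F, A G⟫_ℂ := by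
  have hs : ∀ G ∈ s, 0 ≤ ⟪A G, F⟫_ℂ := fun G hG =>
    ((innerSL ℂ (A G)).restrictScalars ℝ).nonneg_of_mem_closure_conicalCombinations
      (fun F hF => inner_nonneg_symm (h F hF G hG)) hF
  exact ((innerSL ℂ F ∘L A).restrictScalars ℝ).nonneg_of_mem_closure_conicalCombinations
    (fun G hG => inner_nonneg_symm (hs G hG)) hG

end InnerProductSpace

namespace IsHilbertCone

variable {X : Type*} [NormedAddCommGroup X] [InnerProductSpace ℂ X] {C : Set X}

theorem zero_mem (hC : IsHilbertCone C) : (0 : X) ∈ C := by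
  obtain ⟨-, -, hsmul, -, hdecomp⟩ := hC
  obtain ⟨u, hu, -⟩ := hdecomp 0
  simpa using hsmul 0 le_rfl u hu

theorem inner_eq_ofReal_re (hC : IsHilbertCone C) {u v : X} (hu : u ∈ C) (hv : v ∈ C) :
    ⟪u, v⟫_ℂ = (⟪u, v⟫_ℂ).re :=
  Complex.eq_re_of_ofReal_le (by rw [Complex.ofReal_zero]; exact hC.2.2.2.1 u hu v hv)

/-- Self-duality: testing the orthogonal decomposition `w = u - v + i (u' - v')` against
`v`, `u'` and `v'` kills those three parts. -/
theorem mem_of_forall_inner_nonneg (hC : IsHilbertCone C) {w : X}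
    (hw : ∀ c ∈ C, 0 ≤ ⟪c, w⟫_ℂ) : w ∈ C := by
  obtain ⟨u, hu, v, hv, u', hu', v', hv', rfl, huv, hu'v'⟩ := hC.2.2.2.2 w
  have key : ∀ c ∈ C, (⟪c, v⟫_ℂ).re ≤ (⟪c, u⟫_ℂ).re ∧ (⟪c, u'⟫_ℂ).re = (⟪c, v'⟫_ℂ).re := by
    intro c hc
    have h := Complex.nonneg_iff.mp (hw c hc)
    rw [inner_add_right, inner_sub_right, inner_smul_right, inner_sub_right,
      hC.inner_eq_ofReal_re hc hu, hC.inner_eq_ofReal_re hc hv, hC.inner_eq_ofReal_re hc hu',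
      hC.inner_eq_ofReal_re hc hv'] at h
    simp only [Complex.add_re, Complex.sub_re, Complex.ofReal_re, Complex.mul_re, Complex.I_re,
      Complex.I_im, Complex.sub_im, Complex.ofReal_im, Complex.add_im, Complex.mul_im] at h
    constructor <;> linarith
  have hvu : ⟪v, u⟫_ℂ = 0 := by rw [← inner_conj_symm, huv, map_zero]
  have hv'u' : ⟪v', u'⟫_ℂ = 0 := by rw [← inner_conj_symm, hu'v', map_zero]
  have eq_zero (x : X) : (⟪x, x⟫_ℂ).re ≤ 0 → x = 0 := (re_inner_self_nonpos (𝕜 := ℂ)).mp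
  have hv0 := eq_zero v ((key v hv).1.trans_eq (by simp [hvu]))
  have hu'0 := eq_zero u' ((key u' hu').2.trans_le (by simp [hu'v']))
  have hv'0 := eq_zero v' ((key v' hv').2.symm.trans_le (by simp [hv'u']))
  simpa [hv0, hu'0, hv'0] using hu

end IsHilbertCone

section L2

variable {M : Type*} [MeasurableSpace M] {μ : Measure M}

theorem Complex.ae_nonneg_of_forall_setIntegral_nonneg_of_sigmaFinite [SigmaFinite μ]
    {g : M → ℂ}
    (hg : ∀ s, MeasurableSet s → μ s < ∞ → IntegrableOn g s μ)
    (hpos : ∀ s, MeasurableSet s → μ s < ∞ → 0 ≤ ∫ x in s, g x ∂μ) : ∀ᵐ x ∂μ, 0 ≤ g x := by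
  have hre : 0 ≤ᵐ[μ] fun x => (g x).re :=
    MeasureTheory.ae_nonneg_of_forall_setIntegral_nonneg_of_sigmaFinite
      (fun s hs hμs => (hg s hs hμs).re)
      fun s hs hμs => by
        rw [show ∫ x in s, (g x).re ∂μ = (∫ x in s, g x ∂μ).re from integral_re (hg s hs hμs)]
        exact (Complex.nonneg_iff.mp (hpos s hs hμs)).1
  have him : (fun x => (g x).im) =ᵐ[μ] 0 :=
    ae_eq_zero_of_forall_setIntegral_eq_of_sigmaFinite (fun s hs hμs => (hg s hs hμs).im)
      fun s hs hμs => by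
        rw [show ∫ x in s, (g x).im ∂μ = (∫ x in s, g x ∂μ).im from integral_im (hg s hs hμs)]
        exact (Complex.nonneg_iff.mp (hpos s hs hμs)).2.symm
  filter_upwards [hre, him] with x hx hx'
  exact Complex.nonneg_iff.mpr ⟨hx, hx'.symm⟩

variable {X : Type*} [NormedAddCommGroup X] [InnerProductSpace ℂ X] {C : Set X}

theorem ae_inner_nonneg_of_forall_inner_indicatorConstLp_nonneg [SigmaFinite μ]
    (W : Lp X 2 μ) (φ : X)
    (h : ∀ s (hs : MeasurableSet s) (hμs : μ s ≠ ∞), 0 ≤ ⟪indicatorConstLp 2 hs hμs φ, W⟫_ℂ) :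
    ∀ᵐ x ∂μ, 0 ≤ ⟪φ, W x⟫_ℂ :=
  Complex.ae_nonneg_of_forall_setIntegral_nonneg_of_sigmaFinite
    (fun _ _ hμs => (integrableOn_Lp_of_measure_ne_top W one_le_two hμs.ne).const_inner φ)
    fun s hs hμs => by
      simpa only [L2.inner_indicatorConstLp_eq_setIntegral_inner] using h s hs hμs.ne

def nonnegSmulConst (μ : Measure M) (C : Set X) : Set (Lp X 2 μ) :=
  {G | ∃ φ ∈ C, ∃ f : Lp ℂ 2 μ, (∀ᵐ x ∂μ, (0 : ℂ) ≤ f x) ∧ (∀ᵐ x ∂μ, G x = f x • φ)}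

theorem indicatorConstLp_mem_nonnegSmulConst {φ : X} (hφ : φ ∈ C) {s : Set M}
    (hs : MeasurableSet s) (hμs : μ s ≠ ∞) :
    indicatorConstLp 2 hs hμs φ ∈ nonnegSmulConst μ C := by
  refine ⟨φ, hφ, indicatorConstLp 2 hs hμs 1, ?_, ?_⟩
  · filter_upwards [indicatorConstLp_coeFn (p := 2) (hs := hs) (hμs := hμs) (c := (1 : ℂ))]
      with x hx
    rw [hx]
    exact Set.indicator_nonneg (fun _ _ => zero_le_one) x
  · filter_upwards [indicatorConstLp_coeFn (p := 2) (hs := hs) (hμs := hμs) (c := φ),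
      indicatorConstLp_coeFn (p := 2) (hs := hs) (hμs := hμs) (c := (1 : ℂ))] with x hx hx'
    rw [hx, hx']
    by_cases hxs : x ∈ s <;> simp [hxs]

theorem IsHilbertCone.ae_mem_of_forall_inner_indicatorConstLp_nonneg [SigmaFinite μ]
    [TopologicalSpace.SeparableSpace X] (hC : IsHilbertCone C) (W : Lp X 2 μ)
    (h : ∀ φ ∈ C, ∀ s (hs : MeasurableSet s) (hμs : μ s ≠ ∞),
      0 ≤ ⟪indicatorConstLp 2 hs hμs φ, W⟫_ℂ) :
    ∀ᵐ x ∂μ, W x ∈ C := by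
  obtain ⟨D, hDC, hD, hCD⟩ :=
    (TopologicalSpace.IsSeparable.of_separableSpace C).exists_countable_dense_subset
  have hW : ∀ᵐ x ∂μ, ∀ φ ∈ D, 0 ≤ ⟪φ, W x⟫_ℂ := (ae_ball_iff hD).mpr fun φ hφ =>
    ae_inner_nonneg_of_forall_inner_indicatorConstLp_nonneg W φ (h φ (hDC hφ))
  filter_upwards [hW] with x hx
  refine hC.mem_of_forall_inner_nonneg fun c hc => ?_
  exact closure_minimal (t := {c | 0 ≤ ⟪c, W x⟫_ℂ}) hx
    (isClosed_le continuous_const (continuous_id.inner continuous_const)) (hCD hc)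

theorem IsHilbertCone.simpleFunc_toLp_mem_span (hC : IsHilbertCone C) (f : SimpleFunc M X)
    (hfC : ∀ x, f x ∈ C) (hf : MemLp f 2 μ) :
    hf.toLp f ∈ Submodule.span ℝ≥0 (nonnegSmulConst μ C) := by
  induction f using SimpleFunc.induction with
  | @const c s hs =>
    have hcoe : ⇑(SimpleFunc.piecewise s hs (SimpleFunc.const M c) (SimpleFunc.const M 0)) =
        s.indicator fun _ => c := by
      simp only [SimpleFunc.coe_piecewise, SimpleFunc.coe_const]
      rfl
    by_cases hzero : (s.indicator fun _ => c) = 0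
    · rw [(MemLp.toLp_eq_toLp_iff hf MemLp.zero).mpr (by rw [hcoe, hzero]), MemLp.toLp_zero]
      exact Submodule.zero_mem _
    obtain ⟨x, hx⟩ := Function.ne_iff.mp hzero
    obtain ⟨hxs, hc⟩ := Set.indicator_apply_ne_zero.mp hx
    have hcC : c ∈ C := by simpa [hcoe, hxs] using hfC x
    have hμs :=
      SimpleFunc.measure_lt_top_of_memLp_indicator two_ne_zero ENNReal.ofNat_ne_top hc hs hf
    rw [MemLp.toLp_congr hf (memLp_indicator_const 2 hs c (Or.inr hμs.ne)) (.of_eq hcoe)]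
    exact Submodule.subset_span (indicatorConstLp_mem_nonnegSmulConst hcC hs hμs.ne)
  | @add f g hdisj ihf ihg =>
    obtain ⟨hf', hg'⟩ :=
      (memLp_add_of_disjoint hdisj f.stronglyMeasurable g.stronglyMeasurable).mp hf
    have hmem : ∀ (t : Set M) x, t.indicator (⇑(f + g)) x ∈ C := fun t x => by
      by_cases hx : x ∈ t
      · simpa only [Set.indicator_of_mem hx] using hfC x
      · simpa only [Set.indicator_of_notMem hx] using hC.zero_mem
    have hfC' : ∀ x, f x ∈ C := fun x => by
      simpa [Set.indicator_add_eq_left hdisj] using hmem (Function.support f) x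
    have hgC' : ∀ x, g x ∈ C := fun x => by
      simpa [Set.indicator_add_eq_right hdisj] using hmem (Function.support g) x
    rw [MemLp.toLp_congr hf (hf'.add hg') EventuallyEq.rfl, MemLp.toLp_add hf' hg']
    exact add_mem (ihf hfC' hf') (ihg hgC' hg')

/-- The cone `𝒬`. -/
def productCone (μ : Measure M) (C : Set X) : Set (Lp X 2 μ) :=
  closure (conicalCombinations (nonnegSmulConst μ C))

theorem nonnegSmulConst_subset_productCone : nonnegSmulConst μ C ⊆ productCone μ C := by
  intro G hG
  rw [productCone, conicalCombinations_eq_span]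
  exact subset_closure (Submodule.subset_span hG)

theorem IsHilbertCone.mem_productCone_of_ae_mem [TopologicalSpace.SeparableSpace X]
    (hC : IsHilbertCone C) {F : Lp X 2 μ} (hF : ∀ᵐ x ∂μ, F x ∈ C) : F ∈ productCone μ C := by
  borelize X
  let hFm := Lp.aestronglyMeasurable F
  have hg : MemLp (hFm.mk F) 2 μ := (Lp.memLp F).ae_eq hFm.ae_eq_mk
  have hgC : ∀ᵐ x ∂μ, hFm.mk F x ∈ closure C := by
    filter_upwards [hF, hFm.ae_eq_mk] with x hx hgx
    exact subset_closure (hgx ▸ hx)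
  have hmeas := hFm.stronglyMeasurable_mk.measurable
  have happrox := SimpleFunc.memLp_approxOn hmeas hg hC.zero_mem MemLp.zero
  have hlim : Tendsto (fun n => (happrox n).toLp _) atTop (𝓝 (hg.toLp _)) :=
    (Lp.tendsto_Lp_iff_tendsto_eLpNorm'' _ happrox _ hg).mpr
      (SimpleFunc.tendsto_approxOn_Lp_eLpNorm hmeas hC.zero_mem ENNReal.ofNat_ne_top hgC
        (by simpa using hg.2))
  rw [show F = hg.toLp _ from
    (Lp.toLp_coeFn F (Lp.memLp F)).symm.trans (MemLp.toLp_congr _ _ hFm.ae_eq_mk)]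
  refine mem_closure_of_tendsto hlim (Eventually.of_forall fun n => ?_)
  rw [conicalCombinations_eq_span]
  exact hC.simpleFunc_toLp_mem_span _ (SimpleFunc.approxOn_mem hmeas hC.zero_mem n) _

end L2

theorem posPreserving_of_pos_on_products_general
    {M : Type*} [MeasurableSpace M] (μ : Measure M) [SigmaFinite μ]
    {X : Type*} [NormedAddCommGroup X] [InnerProductSpace ℂ X]
    [TopologicalSpace.SeparableSpace X]
    (C : Set X) (hC : IsHilbertCone C)
    (A : Lp X 2 μ →L[ℂ] Lp X 2 μ)
    (h : ∀ φ ∈ C, ∀ ψ ∈ C, ∀ f g : Lp ℂ 2 μ,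
      (∀ᵐ x ∂μ, (0 : ℂ) ≤ f x) → (∀ᵐ x ∂μ, (0 : ℂ) ≤ g x) →
      ∀ F G : Lp X 2 μ, (∀ᵐ x ∂μ, F x = f x • φ) → (∀ᵐ x ∂μ, G x = g x • ψ) →
        (0 : ℂ) ≤ (inner ℂ F (A G) : ℂ)) :
    ∀ F ∈ closure (conicalCombinations
      {G : Lp X 2 μ | ∃ φ ∈ C, ∃ f : Lp ℂ 2 μ,
        (∀ᵐ x ∂μ, (0 : ℂ) ≤ f x) ∧ (∀ᵐ x ∂μ, G x = f x • φ)}),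
      A F ∈ closure (conicalCombinations
        {G : Lp X 2 μ | ∃ φ ∈ C, ∃ f : Lp ℂ 2 μ,
          (∀ᵐ x ∂μ, (0 : ℂ) ≤ f x) ∧ (∀ᵐ x ∂μ, G x = f x • φ)}) := by
  intro F hF
  have hprod : ∀ G ∈ nonnegSmulConst μ C, ∀ G' ∈ nonnegSmulConst μ C, 0 ≤ ⟪G, A G'⟫_ℂ := by
    rintro G ⟨φ, hφ, f, hf, hG⟩ G' ⟨ψ, hψ, g, hg, hG'⟩
    exact h φ hφ ψ hψ f g hf hg G G' hG hG'
  have hpair : ∀ G ∈ productCone μ C, 0 ≤ ⟪G, A F⟫_ℂ := fun G hG =>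
    inner_nonneg_of_mem_closure_conicalCombinations A hprod hG hF
  refine hC.mem_productCone_of_ae_mem
    (hC.ae_mem_of_forall_inner_indicatorConstLp_nonneg _ fun φ hφ s hs hμs => hpair _ ?_)
  exact nonnegSmulConst_subset_productCone (indicatorConstLp_mem_nonnegSmulConst hφ hs hμs)

theorem posPreserving_of_pos_on_products
    {M : Type*} [MeasurableSpace M] (μ : Measure M) [SigmaFinite μ]
    [TopologicalSpace.SeparableSpace (Lp ℂ 2 μ)]
    {X : Type*} [NormedAddCommGroup X] [InnerProductSpace ℂ X] [CompleteSpace X]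
    [TopologicalSpace.SeparableSpace X]
    (C : Set X) (hC : IsHilbertCone C)
    (A : Lp X 2 μ →L[ℂ] Lp X 2 μ)
    (h : ∀ φ ∈ C, ∀ ψ ∈ C, ∀ f g : Lp ℂ 2 μ,
      (∀ᵐ x ∂μ, (0 : ℂ) ≤ f x) → (∀ᵐ x ∂μ, (0 : ℂ) ≤ g x) →
      ∀ F G : Lp X 2 μ, (∀ᵐ x ∂μ, F x = f x • φ) → (∀ᵐ x ∂μ, G x = g x • ψ) →
        (0 : ℂ) ≤ (inner ℂ F (A G) : ℂ)) :
    ∀ F ∈ closure (conicalCombinations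
      {G : Lp X 2 μ | ∃ φ ∈ C, ∃ f : Lp ℂ 2 μ,
        (∀ᵐ x ∂μ, (0 : ℂ) ≤ f x) ∧ (∀ᵐ x ∂μ, G x = f x • φ)}),
      A F ∈ closure (conicalCombinations
        {G : Lp X 2 μ | ∃ φ ∈ C, ∃ f : Lp ℂ 2 μ,
          (∀ᵐ x ∂μ, (0 : ℂ) ≤ f x) ∧ (∀ᵐ x ∂μ, G x = f x • φ)}) :=
  posPreserving_of_pos_on_products_general μ C hC A h
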